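/- arXiv:2206.09379 — 5 statements merged into one kernel-verified Lean document; each statement's English description precedes it below -/
import Mathlib

section
/- Let a, b ∈ ℝ with b > 0, let ρ > 0, set t := 2a − 1, and define φ(u) := (a − (u)_{0/1})² + ρ(u − b)² for u ∈ ℝ. Then: (i) if t > −ρb², then b is a global minimizer of φ; (ii) if t < −ρb², then 0 is a global minimizer of φ; (iii) if t = −ρb², then both 0 and b are global minimizers of φ. -/
set_option autoImplicit false

/-- The step (0/1) function on `ℝ`: `1` for positive inputs, `0` otherwise. -/
noncomputable def step01 (u : ℝ) : ℝ := if 0 < u then 1 else 0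

/-- minimizers of `φ(u) = (a − (u)_{0/1})² + ρ(u − b)²` when `b > 0`,
with `t = 2a − 1`:
(i) if `t > −ρb²` then `b` is a global minimizer;
(ii) if `t < −ρb²` then `0` is a global minimizer;
(iii) if `t = −ρb²` then both `0` and `b` are global minimizers. -/
theorem step01_prox_b_pos
    (a b ρ : ℝ) (hb : 0 < b) (hρ : 0 < ρ)
    (t : ℝ) (ht : t = 2 * a - 1)
    (φ : ℝ → ℝ) (hφ : φ = fun u => (a - step01 u) ^ 2 + ρ * (u - b) ^ 2) :
    (t > -(ρ * b ^ 2) → ∀ u : ℝ, φ b ≤ φ u) ∧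
    (t < -(ρ * b ^ 2) → ∀ u : ℝ, φ 0 ≤ φ u) ∧
    (t = -(ρ * b ^ 2) → (∀ u : ℝ, φ 0 ≤ φ u) ∧ (∀ u : ℝ, φ b ≤ φ u)) := by
  subst hφ ht
  have hfb : (fun u => (a - step01 u) ^ 2 + ρ * (u - b) ^ 2) b = (a - 1) ^ 2 := by
    simp [step01, hb]
  have hf0 : (fun u => (a - step01 u) ^ 2 + ρ * (u - b) ^ 2) 0 = a ^ 2 + ρ * b ^ 2 := by
    simp [step01]
  have hpos : ∀ u : ℝ, 0 < u →
      (a - 1) ^ 2 ≤ (a - step01 u) ^ 2 + ρ * (u - b) ^ 2 := by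
    intro u hu
    simp only [step01, if_pos hu]
    nlinarith [sq_nonneg (u - b)]
  have hneg : ∀ u : ℝ, ¬ 0 < u →
      a ^ 2 + ρ * b ^ 2 ≤ (a - step01 u) ^ 2 + ρ * (u - b) ^ 2 := by
    intro u hu
    push_neg at hu
    simp only [step01, if_neg (not_lt.2 hu)]
    nlinarith [mul_nonneg (mul_nonneg hρ.le (neg_nonneg.2 hu)) (by linarith : (0:ℝ) ≤ 2*b - u)]
  have key : ∀ u : ℝ, (fun u => (a - step01 u) ^ 2 + ρ * (u - b) ^ 2) u
      = (a - step01 u) ^ 2 + ρ * (u - b) ^ 2 := fun u => rfl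
  refine ⟨?_, ?_, ?_⟩
  · intro h u
    rw [hfb, key]
    by_cases hu : 0 < u
    · exact hpos u hu
    · have := hneg u hu; nlinarith
  · intro h u
    rw [hf0, key]
    by_cases hu : 0 < u
    · have := hpos u hu; nlinarith
    · exact hneg u hu
  · intro h
    constructor <;> intro u
    · rw [hf0, key]
      by_cases hu : 0 < u
      · have := hpos u hu; nlinarith
      · exact hneg u hu
    · rw [hfb, key]
      by_cases hu : 0 < u
      · exact hpos u hu
      · have := hneg u hu; nlinarith
end

section
/- Let a, b ∈ ℝ with b ≤ 0, let ρ > 0, set t := 2a − 1, and define φ(u) := (a − (u)_{0/1})² + ρ(u − b)² for u ∈ ℝ. If t ≤ ρb², then b is a global minimizer of φ, i.e., φ(b) ≤ φ(u) for all u ∈ ℝ. -/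
set_option autoImplicit false

/-- for `φ(u) = (a − (u)_{0/1})² + ρ(u − b)²` with `b ≤ 0` and
`t = 2a − 1 ≤ ρb²`, the point `b` is a global minimizer of `φ`. -/
theorem step01_prox_b_nonpos_minimizer
    (a b ρ : ℝ) (hb : b ≤ 0) (hρ : 0 < ρ)
    (t : ℝ) (ht : t = 2 * a - 1)
    (φ : ℝ → ℝ) (hφ : φ = fun u => (a - step01 u) ^ 2 + ρ * (u - b) ^ 2)
    (hle : t ≤ ρ * b ^ 2) :
    ∀ u : ℝ, φ b ≤ φ u := by
  intro u
  subst hφ ht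
  simp only [step01]
  have hbn : ¬ (0 < b) := not_lt.2 hb
  rw [if_neg hbn]
  by_cases hu : 0 < u
  · rw [if_pos hu]
    nlinarith [sq_nonneg (u - b), mul_le_mul_of_nonneg_left (sq_le_sq' (by linarith : -(u-b) ≤ b) (by linarith : b ≤ u - b)) hρ.le]
  · rw [if_neg hu]
    nlinarith [sq_nonneg (u - b)]
end

section
/- Let a, b ∈ ℝ with b ≤ 0, let ρ > 0, set t := 2a − 1, and define φ(u) := (a − (u)_{0/1})² + ρ(u − b)² for u ∈ ℝ. If t > ρb², then the infimum of φ over ℝ equals (1 − a)² + ρb², and φ(ε) → (1 − a)² + ρb² as ε → 0⁺. -/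
set_option autoImplicit false

open Filter Topology

/-- for `φ(u) = (a − (u)_{0/1})² + ρ(u − b)²` with `b ≤ 0` and
`t = 2a − 1 > ρb²`, the infimum of `φ` over `ℝ` equals `(1 − a)² + ρb²`, and
`φ(ε) → (1 − a)² + ρb²` as `ε → 0⁺`. -/
theorem step01_prox_b_nonpos_infimum
    (a b ρ : ℝ) (hb : b ≤ 0) (hρ : 0 < ρ)
    (t : ℝ) (ht : t = 2 * a - 1)
    (φ : ℝ → ℝ) (hφ : φ = fun u => (a - step01 u) ^ 2 + ρ * (u - b) ^ 2)
    (hgt : t > ρ * b ^ 2) :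
    IsGLB (Set.range φ) ((1 - a) ^ 2 + ρ * b ^ 2) ∧
      Tendsto φ (𝓝[>] (0 : ℝ)) (𝓝 ((1 - a) ^ 2 + ρ * b ^ 2)) := by
  subst hφ ht
  set L := (1 - a) ^ 2 + ρ * b ^ 2 with hL
  have htend : Tendsto (fun u : ℝ => (a - step01 u) ^ 2 + ρ * (u - b) ^ 2) (𝓝[>] (0:ℝ)) (𝓝 L) := by
    have h1 : Tendsto (fun u : ℝ => (a - 1) ^ 2 + ρ * (u - b) ^ 2) (𝓝[>] (0:ℝ)) (𝓝 L) := by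
      have hc : Tendsto (fun u : ℝ => (a - 1) ^ 2 + ρ * (u - b) ^ 2) (𝓝 (0:ℝ))
          (𝓝 ((a - 1) ^ 2 + ρ * ((0:ℝ) - b) ^ 2)) := by
        exact (continuous_const.add (continuous_const.mul
          ((continuous_id.sub continuous_const).pow 2))).tendsto 0
      have heq : (a - 1) ^ 2 + ρ * ((0:ℝ) - b) ^ 2 = L := by rw [hL]; ring
      rw [heq] at hc
      exact hc.mono_left nhdsWithin_le_nhds
    refine h1.congr' ?_
    filter_upwards [self_mem_nhdsWithin] with u hu
    simp [step01, Set.mem_Ioi.mp hu]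
  have hlb : ∀ u : ℝ, L ≤ (a - step01 u) ^ 2 + ρ * (u - b) ^ 2 := by
    intro u
    by_cases hu : 0 < u
    · simp only [step01, if_pos hu, hL]
      nlinarith [sq_nonneg u, mul_nonneg hu.le (neg_nonneg.2 hb), hρ.le]
    · simp only [step01, if_neg hu, hL]
      push_neg at hu
      nlinarith [sq_nonneg (u - b), sq_nonneg b, mul_nonneg hρ.le (sq_nonneg (u - b))]
  constructor
  · constructor
    · rintro x ⟨u, rfl⟩
      exact hlb u
    · intro c hc
      refine ge_of_tendsto htend ?_
      filter_upwards with u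
      exact hc ⟨u, rfl⟩
  · exact htend
end

section
/- Let β > 0, λ > 0 and H ∈ ℝ^{m×n}. Then the set Prox_{βλ‖·‖_{0,2}}(H) := argmin_{W∈ℝ^{m×n}} { λ‖W‖_{0,2} + (1/(2β))‖W − H‖² } is nonempty, and a matrix W belongs to this set if and only if for every row index s ∈ [m]: W_{s:} = 0 whenever ‖H_{s:}‖ < √(2βλ); W_{s:} = H_{s:} whenever ‖H_{s:}‖ > √(2βλ); and W_{s:} ∈ {0, H_{s:}} whenever ‖H_{s:}‖ = √(2βλ). -/
set_option autoImplicit false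

open Finset

/-- Squared Frobenius norm of a matrix. -/
def frobSq {m n : ℕ} (W : Matrix (Fin m) (Fin n) ℝ) : ℝ :=
  ∑ i, ∑ j, (W i j) ^ 2

/-- Euclidean norm of a (row) vector. -/
noncomputable def rowNorm {n : ℕ} (v : Fin n → ℝ) : ℝ :=
  Real.sqrt (∑ j, (v j) ^ 2)

open Classical in
/-- `‖W‖_{0,2}`: the number of nonzero rows of `W`, as a real number. -/
noncomputable def norm02 {m n : ℕ} (W : Matrix (Fin m) (Fin n) ℝ) : ℝ :=
  ((Finset.univ.filter fun s : Fin m => W s ≠ 0).card : ℝ)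

/-- The proximal operator (as a set of global minimizers):
`Prox_β G (H) = argmin_W { G(W) + (1/(2β))‖W − H‖² }`. -/
def ProxSet {m n : ℕ} (β : ℝ) (G : Matrix (Fin m) (Fin n) ℝ → ℝ)
    (H : Matrix (Fin m) (Fin n) ℝ) : Set (Matrix (Fin m) (Fin n) ℝ) :=
  {W | ∀ Z : Matrix (Fin m) (Fin n) ℝ,
    G W + (1 / (2 * β)) * frobSq (W - H) ≤ G Z + (1 / (2 * β)) * frobSq (Z - H)}

/-!
The objective `λ‖W‖_{0,2} + ‖W − H‖²/(2β)` is a sum of one term per row, each depending on that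
row only, so `W` is a minimizer iff every row `W_{s:}` minimizes
`v ↦ λ·[v ≠ 0] + ‖v − H_{s:}‖²/(2β)`. On `v ≠ 0` this row cost is at least `λ`, with equality
only at `v = H_{s:}`, while at `v = 0` it is `‖H_{s:}‖²/(2β)`; comparing the two values gives the
threshold `‖H_{s:}‖ = √(2βλ)`.
-/

theorem forall_sum_le_sum_iff {ι α M : Type*} [Fintype ι] [AddCommMonoid M] [PartialOrder M]
    [IsOrderedCancelAddMonoid M] (f : ι → α → M) (x : ι → α) :
    (∀ y : ι → α, ∑ i, f i (x i) ≤ ∑ i, f i (y i)) ↔ ∀ i a, f i (x i) ≤ f i a := by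
  classical
  refine ⟨fun hx i a => ?_, fun hx y => sum_le_sum fun i _ => hx i (y i)⟩
  have hxa := hx (Function.update x i a)
  simp only [Function.apply_update f x i a, sum_update_of_mem (mem_univ i)] at hxa
  rwa [← add_sum_erase _ _ (mem_univ i), ← sdiff_singleton_eq_erase, add_le_add_iff_right] at hxa

section l0Cost

variable {E : Type*} [Zero E]

open Classical in
noncomputable def l0Cost (lam : ℝ) (q : E → ℝ) (v : E) : ℝ :=
  (if v = 0 then 0 else lam) + q v

variable {lam : ℝ} {q : E → ℝ} {h : E}

theorem l0Cost_zero (lam : ℝ) (q : E → ℝ) : l0Cost lam q 0 = q 0 := by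
  simp [l0Cost]

theorem l0Cost_of_ne_zero (q : E → ℝ) {v : E} (hv : v ≠ 0) : l0Cost lam q v = lam + q v := by
  simp [l0Cost, hv]

theorem le_l0Cost_of_ne_zero (hq : ∀ v, 0 ≤ q v) {v : E} (hv : v ≠ 0) : lam ≤ l0Cost lam q v := by
  rw [l0Cost_of_ne_zero q hv]
  linarith [hq v]

theorem eq_of_l0Cost_le (hq : ∀ v, 0 ≤ q v) (hqh : ∀ v, q v = 0 ↔ v = h) {v : E} (hv : v ≠ 0)
    (hle : l0Cost lam q v ≤ lam) : v = h := by
  rw [l0Cost_of_ne_zero q hv] at hle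
  exact (hqh v).1 (le_antisymm (by linarith) (hq v))

theorem forall_l0Cost_le_iff (hlam : 0 ≤ lam) (hq : ∀ v, 0 ≤ q v) (hqh : ∀ v, q v = 0 ↔ v = h)
    (v : E) :
    (∀ u, l0Cost lam q v ≤ l0Cost lam q u) ↔
      (q 0 < lam → v = 0) ∧ (lam < q 0 → v = h) ∧ (q 0 = lam → v = 0 ∨ v = h) := by
  have hqh0 : q h = 0 := (hqh h).2 rfl
  have cost_h : h ≠ 0 → l0Cost lam q h = lam := fun hh => by
    rw [l0Cost_of_ne_zero q hh, hqh0, add_zero]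
  constructor
  · intro hmin
    have hv0 := hmin 0
    rw [l0Cost_zero] at hv0
    refine ⟨fun hlt => ?_, fun hgt => ?_, fun heq => ?_⟩
    · by_contra hv
      linarith [le_l0Cost_of_ne_zero hq hv (lam := lam)]
    · have hh : h ≠ 0 := by
        rintro rfl
        linarith
      have hvh := hmin h
      rw [cost_h hh] at hvh
      have hv : v ≠ 0 := by
        rintro rfl
        rw [l0Cost_zero] at hvh
        linarith
      exact eq_of_l0Cost_le hq hqh hv hvh
    · by_cases hv : v = 0
      · exact .inl hv
      · exact .inr (eq_of_l0Cost_le (lam := lam) hq hqh hv (by linarith))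
  · rintro ⟨hlt, hgt, heq⟩ u
    by_cases hv : v = 0
    · subst hv
      have hle : q 0 ≤ lam := by
        by_contra! hgt'
        have h0 := hgt hgt'
        subst h0
        linarith
      rw [l0Cost_zero]
      by_cases hu : u = 0
      · rw [hu, l0Cost_zero]
      · linarith [le_l0Cost_of_ne_zero hq hu (lam := lam)]
    · have hle : lam ≤ q 0 := not_lt.1 fun h' => hv (hlt h')
      have hvh : v = h := (hle.lt_or_eq).elim hgt fun h' => (heq h'.symm).resolve_left hv
      subst hvh
      rw [cost_h hv]
      by_cases hu : u = 0
      · rwa [hu, l0Cost_zero]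
      · exact le_l0Cost_of_ne_zero hq hu

end l0Cost

noncomputable def proxRowCost {n : ℕ} (β lam : ℝ) (h v : Fin n → ℝ) : ℝ :=
  l0Cost lam (fun v => 1 / (2 * β) * ∑ j, (v j - h j) ^ 2) v

theorem prox_objective_eq_sum_proxRowCost {m n : ℕ} (β lam : ℝ) (W H : Matrix (Fin m) (Fin n) ℝ) :
    lam * norm02 W + 1 / (2 * β) * frobSq (W - H) = ∑ s, proxRowCost β lam (H s) (W s) := by
  classical
  simp only [norm02, frobSq, proxRowCost, l0Cost, card_filter, Nat.cast_sum, mul_sum,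
    sum_add_distrib, Matrix.sub_apply]
  congr 1
  refine sum_congr rfl fun s _ => ?_
  split_ifs <;> simp_all

theorem mem_proxSet_iff_forall_row {m n : ℕ} (β lam : ℝ) (H W : Matrix (Fin m) (Fin n) ℝ) :
    W ∈ ProxSet β (fun W => lam * norm02 W) H ↔
      ∀ s u, proxRowCost β lam (H s) (W s) ≤ proxRowCost β lam (H s) u := by
  simp only [ProxSet, Set.mem_ofPred_eq, prox_objective_eq_sum_proxRowCost]
  exact forall_sum_le_sum_iff (fun s => proxRowCost β lam (H s)) W

theorem forall_proxRowCost_le_iff {n : ℕ} {β lam : ℝ} (hβ : 0 < β) (hlam : 0 < lam)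
    (h v : Fin n → ℝ) :
    (∀ u, proxRowCost β lam h v ≤ proxRowCost β lam h u) ↔
      (rowNorm h < Real.sqrt (2 * β * lam) → v = 0) ∧
      (rowNorm h > Real.sqrt (2 * β * lam) → v = h) ∧
      (rowNorm h = Real.sqrt (2 * β * lam) → v = 0 ∨ v = h) := by
  have hq : ∀ u : Fin n → ℝ, 0 ≤ 1 / (2 * β) * ∑ j, (u j - h j) ^ 2 := fun u => by positivity
  have hqh : ∀ u : Fin n → ℝ, 1 / (2 * β) * ∑ j, (u j - h j) ^ 2 = 0 ↔ u = h := fun u => by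
    rw [mul_eq_zero, sum_eq_zero_iff_of_nonneg fun j _ => sq_nonneg _]
    simp [hβ.ne', funext_iff, sub_eq_zero]
  unfold proxRowCost
  rw [forall_l0Cost_le_iff hlam.le hq hqh]
  -- both sides of the threshold are images of `t ↦ t² / (2β)`, strictly monotone on `t ≥ 0`
  have hmono : StrictMonoOn (fun t : ℝ => t ^ 2 / (2 * β)) (Set.Ici 0) := fun a ha b _ hab =>
    div_lt_div_of_pos_right (pow_lt_pow_left₀ hab ha two_ne_zero) (by positivity)
  have hq0 : 1 / (2 * β) * ∑ j, ((0 : Fin n → ℝ) j - h j) ^ 2 = rowNorm h ^ 2 / (2 * β) := by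
    rw [rowNorm, Real.sq_sqrt (by positivity)]
    simp [div_eq_inv_mul]
  set r := Real.sqrt (2 * β * lam) with hr_def
  have hlam' : lam = r ^ 2 / (2 * β) := by
    rw [hr_def, Real.sq_sqrt (by positivity)]
    field_simp
  have hr : rowNorm h ∈ Set.Ici 0 := Real.sqrt_nonneg _
  have hs : r ∈ Set.Ici 0 := Real.sqrt_nonneg _
  rw [hq0, hlam', hmono.lt_iff_lt hr hs, hmono.lt_iff_lt hs hr, hmono.injOn.eq_iff hr hs, gt_iff_lt]

/-- the proximal set of `λ‖·‖_{0,2}` at `H` is nonempty, and `W` belongs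
to it iff each row `W_{s:}` is `0` when `‖H_{s:}‖ < √(2βλ)`, equals `H_{s:}` when
`‖H_{s:}‖ > √(2βλ)`, and is `0` or `H_{s:}` when `‖H_{s:}‖ = √(2βλ)`. -/
theorem prox_rowSparsity_characterization
    (m n : ℕ) (β lam : ℝ) (hβ : 0 < β) (hlam : 0 < lam)
    (H : Matrix (Fin m) (Fin n) ℝ) :
    (ProxSet β (fun W => lam * norm02 W) H).Nonempty ∧
    (∀ W : Matrix (Fin m) (Fin n) ℝ,
      W ∈ ProxSet β (fun W => lam * norm02 W) H ↔
        ∀ s : Fin m,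
          (rowNorm (H s) < Real.sqrt (2 * β * lam) → W s = 0) ∧
          (rowNorm (H s) > Real.sqrt (2 * β * lam) → W s = H s) ∧
          (rowNorm (H s) = Real.sqrt (2 * β * lam) → W s = 0 ∨ W s = H s)) := by
  have hiff : ∀ W : Matrix (Fin m) (Fin n) ℝ, W ∈ ProxSet β (fun W => lam * norm02 W) H ↔ _ :=
    fun W => (mem_proxSet_iff_forall_row β lam H W).trans <|
      forall_congr' fun s => forall_proxRowCost_le_iff hβ hlam (H s) (W s)
  refine ⟨⟨fun s => if rowNorm (H s) < Real.sqrt (2 * β * lam) then 0 else H s,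
    (hiff _).2 fun s => ⟨fun hlt => if_pos hlt, fun hgt => if_neg hgt.not_gt,
      fun heq => .inr (if_neg heq.not_lt)⟩⟩, hiff⟩
end

section
/- Let τ, γ, λ > 0, U ∈ ℝ^{p×n}, V ∈ ℝ^{p×m}, and define Ψ(W) := (τ/2)‖U − VW‖² + (γ/2)‖W‖² for W ∈ ℝ^{m×n}. Suppose W* ∈ ℝ^{m×n} is a P-stationary point for some β > 0, i.e., W* ∈ Prox_{βλ‖·‖_{0,2}}(W* − β∇Ψ(W*)). Then for every W ∈ ℝ^{m×n} with ‖W − W*‖ < √(βλ/(2m²)) one has Ψ(W) + λ‖W‖_{0,2} − (Ψ(W*) + λ‖W*‖_{0,2}) ≥ (γ/2)‖W − W*‖². -/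
set_option autoImplicit false

open Matrix

/-- Frobenius norm of a matrix. -/
noncomputable def frobNorm {m n : ℕ} (W : Matrix (Fin m) (Fin n) ℝ) : ℝ :=
  Real.sqrt (frobSq W)

/-- The objective `Ψ(W) = (τ/2)‖U − VW‖² + (γ/2)‖W‖²`. -/
noncomputable def Psi {p m n : ℕ} (τ γ : ℝ) (U : Matrix (Fin p) (Fin n) ℝ)
    (V : Matrix (Fin p) (Fin m) ℝ) (W : Matrix (Fin m) (Fin n) ℝ) : ℝ :=
  (τ / 2) * frobSq (U - V * W) + (γ / 2) * frobSq W

/-- The gradient of `Ψ`, namely `∇Ψ(W) = τ Vᵀ(VW − U) + γ W`. -/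
def gradPsi {p m n : ℕ} (τ γ : ℝ) (U : Matrix (Fin p) (Fin n) ℝ)
    (V : Matrix (Fin p) (Fin m) ℝ) (W : Matrix (Fin m) (Fin n) ℝ) :
    Matrix (Fin m) (Fin n) ℝ :=
  τ • (Vᵀ * (V * W - U)) + γ • W

/-!
Write `G = ∇Ψ(W*)` and `D = W − W*`. Since `Ψ` is quadratic,
`Ψ(W) − Ψ(W*) = ⟨G, D⟩ + (τ/2)‖VD‖² + (γ/2)‖D‖²`, so it suffices that
`⟨G, D⟩ + λ(‖W‖_{0,2} − ‖W*‖_{0,2}) ≥ 0`, and this splits over the rows. The proximal map of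
`βλ‖·‖_{0,2}` is row-wise hard thresholding at level `√(2βλ)`, so P-stationarity says: on a
nonzero row of `W*` the gradient row vanishes and `‖W*ₛ‖² ≥ 2βλ`, while on a zero row
`β‖Gₛ‖² ≤ 2λ`. Within the radius every row has `‖Dₛ‖² < βλ/2`, so no nonzero row of `W*` is
switched off, and on a zero row of `W*` that `W` switches on, Cauchy–Schwarz gives
`|⟨Gₛ, Dₛ⟩| ≤ ‖Gₛ‖‖Dₛ‖ ≤ λ`, which the penalty `λ` pays for.
-/

section Rows

variable {ι κ : Type*}

lemma sum_updateRow [Fintype ι] [DecidableEq ι] (g : ι → (κ → ℝ) → ℝ) (W : Matrix ι κ ℝ)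
    (s : ι) (v : κ → ℝ) :
    ∑ i, g i (W.updateRow s v i) = ∑ i, g i (W i) - g s (W s) + g s v := by
  rw [← Finset.add_sum_erase _ _ (Finset.mem_univ s),
    ← Finset.add_sum_erase _ (fun i => g i (W i)) (Finset.mem_univ s),
    Finset.sum_congr rfl fun i hi => by rw [updateRow_ne (Finset.ne_of_mem_erase hi)],
    updateRow_self]
  ring

noncomputable def nzIndicator (v : κ → ℝ) : ℝ :=
  open Classical in if v = 0 then 0 else 1

@[simp]
lemma nzIndicator_zero : nzIndicator (0 : κ → ℝ) = 0 :=
  if_pos rfl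

lemma nzIndicator_of_ne_zero {v : κ → ℝ} (hv : v ≠ 0) : nzIndicator v = 1 :=
  if_neg hv

lemma nzIndicator_le_one (v : κ → ℝ) : nzIndicator v ≤ 1 := by
  unfold nzIndicator
  split_ifs <;> norm_num

variable [Fintype κ]

def sumSq (v : κ → ℝ) : ℝ :=
  ∑ j, v j ^ 2

lemma sumSq_nonneg (v : κ → ℝ) : 0 ≤ sumSq v :=
  Finset.sum_nonneg fun _ _ => sq_nonneg _

lemma sumSq_eq_zero_iff {v : κ → ℝ} : sumSq v = 0 ↔ v = 0 := by
  simp [sumSq, Finset.sum_eq_zero_iff_of_nonneg fun i _ => sq_nonneg (v i), funext_iff]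

@[simp]
lemma sumSq_zero : sumSq (0 : κ → ℝ) = 0 :=
  sumSq_eq_zero_iff.2 rfl

lemma sumSq_neg (v : κ → ℝ) : sumSq (-v) = sumSq v := by
  simp [sumSq]

lemma sumSq_smul (c : ℝ) (v : κ → ℝ) : sumSq (c • v) = c ^ 2 * sumSq v := by
  simp [sumSq, Finset.mul_sum, mul_pow]

variable [Fintype ι]

def frobInner (A B : Matrix ι κ ℝ) : ℝ :=
  ∑ i, A i ⬝ᵥ B i

lemma frobInner_add_left (A B C : Matrix ι κ ℝ) :
    frobInner (A + B) C = frobInner A C + frobInner B C := by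
  rw [frobInner, frobInner, frobInner, ← Finset.sum_add_distrib]
  exact Finset.sum_congr rfl fun i _ => add_dotProduct (A i) (B i) (C i)

lemma frobInner_smul_left (c : ℝ) (A B : Matrix ι κ ℝ) :
    frobInner (c • A) B = c * frobInner A B := by
  rw [frobInner, frobInner, Finset.mul_sum]
  exact Finset.sum_congr rfl fun i _ => smul_dotProduct c (A i) (B i)

lemma frobInner_eq_trace (A B : Matrix ι κ ℝ) : frobInner A B = trace (A * Bᵀ) := by
  simp [frobInner, trace, mul_apply, dotProduct]

lemma frobInner_transpose_mul {ρ : Type*} [Fintype ρ] (V : Matrix ρ ι ℝ) (X : Matrix ρ κ ℝ)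
    (D : Matrix ι κ ℝ) : frobInner (Vᵀ * X) D = frobInner X (V * D) := by
  rw [frobInner_eq_trace, frobInner_eq_trace, transpose_mul, Matrix.mul_assoc, trace_mul_comm,
    Matrix.mul_assoc]

end Rows

section Frobenius

variable {m n : ℕ}

lemma frobSq_sub_eq_sum_sumSq (A B : Matrix (Fin m) (Fin n) ℝ) :
    frobSq (A - B) = ∑ i, sumSq (A i - B i) :=
  rfl

lemma frobSq_nonneg (A : Matrix (Fin m) (Fin n) ℝ) : 0 ≤ frobSq A :=
  Finset.sum_nonneg fun i _ => sumSq_nonneg (A i)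

lemma sumSq_row_le_frobSq (A : Matrix (Fin m) (Fin n) ℝ) (i : Fin m) : sumSq (A i) ≤ frobSq A :=
  Finset.single_le_sum (fun i _ => sumSq_nonneg (A i)) (Finset.mem_univ i)

lemma norm02_eq_sum_nzIndicator (A : Matrix (Fin m) (Fin n) ℝ) :
    norm02 A = ∑ i, nzIndicator (A i) := by
  simp only [norm02, nzIndicator, Finset.card_filter, ite_not, Nat.cast_sum, Nat.cast_ite,
    Nat.cast_zero, Nat.cast_one]
  congr! 2

lemma frobSq_add (A B : Matrix (Fin m) (Fin n) ℝ) :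
    frobSq (A + B) = frobSq A + 2 * frobInner A B + frobSq B := by
  simp only [frobSq, frobInner, dotProduct, Matrix.add_apply, add_sq, Finset.sum_add_distrib,
    Finset.mul_sum]
  ring_nf

lemma frobSq_neg (A : Matrix (Fin m) (Fin n) ℝ) : frobSq (-A) = frobSq A := by
  simp [frobSq]

end Frobenius

section Prox

variable {m n : ℕ} {β lam : ℝ} {H W : Matrix (Fin m) (Fin n) ℝ}

lemma proxSet_norm02_row_le (hW : W ∈ ProxSet β (fun Z => lam * norm02 Z) H) (s : Fin m)
    (v : Fin n → ℝ) :
    lam * nzIndicator (W s) + 1 / (2 * β) * sumSq (W s - H s) ≤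
      lam * nzIndicator v + 1 / (2 * β) * sumSq (v - H s) := by
  have h := hW (W.updateRow s v)
  simp only [norm02_eq_sum_nzIndicator, frobSq_sub_eq_sum_sumSq] at h
  rw [sum_updateRow (fun _ => nzIndicator),
    sum_updateRow (fun i w => sumSq (w - H i))] at h
  linarith

lemma proxSet_norm02_row_of_ne_zero (hβ : 0 < β) (hlam : 0 ≤ lam)
    (hW : W ∈ ProxSet β (fun Z => lam * norm02 Z) H) {s : Fin m} (hs : W s ≠ 0) :
    W s = H s ∧ 2 * β * lam ≤ sumSq (H s) := by
  have hc : 0 < 1 / (2 * β) := by positivity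
  have hkeep := proxSet_norm02_row_le hW s (H s)
  have hkill := proxSet_norm02_row_le hW s 0
  rw [nzIndicator_of_ne_zero hs, sub_self, sumSq_zero] at hkeep
  rw [nzIndicator_of_ne_zero hs, nzIndicator_zero, zero_sub, sumSq_neg] at hkill
  have hrow : sumSq (W s - H s) = 0 :=
    le_antisymm (by nlinarith [nzIndicator_le_one (H s)]) (sumSq_nonneg _)
  refine ⟨sub_eq_zero.1 (sumSq_eq_zero_iff.1 hrow), ?_⟩
  rw [hrow] at hkill
  field_simp at hkill
  linarith

lemma proxSet_norm02_row_of_eq_zero (hβ : 0 < β) (hlam : 0 ≤ lam)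
    (hW : W ∈ ProxSet β (fun Z => lam * norm02 Z) H) {s : Fin m} (hs : W s = 0) :
    sumSq (H s) ≤ 2 * β * lam := by
  have hkeep := proxSet_norm02_row_le hW s (H s)
  rw [hs, nzIndicator_zero, zero_sub, sumSq_neg, sub_self, sumSq_zero] at hkeep
  field_simp at hkeep
  have : lam * 2 * β * nzIndicator (H s) ≤ lam * 2 * β :=
    mul_le_of_le_one_right (by positivity) (nzIndicator_le_one _)
  linarith

end Prox

section Stationarity

variable {m n : ℕ} {β lam : ℝ} {G W W' : Matrix (Fin m) (Fin n) ℝ} {s : Fin m}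

lemma pStationary_row_of_ne_zero (hβ : 0 < β) (hlam : 0 ≤ lam)
    (hP : W' ∈ ProxSet β (fun Z => lam * norm02 Z) (W' - β • G)) (hs : W' s ≠ 0) :
    G s = 0 ∧ 2 * β * lam ≤ sumSq (W' s) := by
  obtain ⟨hfix, hbig⟩ := proxSet_norm02_row_of_ne_zero hβ hlam hP hs
  rw [show (W' - β • G) s = W' s - β • G s from rfl] at hfix hbig
  have hG : G s = 0 :=
    (smul_eq_zero.1 (sub_eq_self.1 hfix.symm)).resolve_left hβ.ne'
  rw [hG, smul_zero, sub_zero] at hbig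
  exact ⟨hG, hbig⟩

lemma pStationary_row_of_eq_zero (hβ : 0 < β) (hlam : 0 ≤ lam)
    (hP : W' ∈ ProxSet β (fun Z => lam * norm02 Z) (W' - β • G)) (hs : W' s = 0) :
    β * sumSq (G s) ≤ 2 * lam := by
  have h := proxSet_norm02_row_of_eq_zero hβ hlam hP hs
  rw [show (W' - β • G) s = W' s - β • G s from rfl, hs, zero_sub, sumSq_neg, sumSq_smul] at h
  nlinarith

end Stationarity

lemma nzIndicator_sub_add_dotProduct_nonneg {κ : Type*} [Fintype κ] {β lam : ℝ}
    (hβ : 0 < β) (hlam : 0 ≤ lam) {w w' g : κ → ℝ}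
    (hsupp : w' ≠ 0 → g = 0 ∧ 2 * β * lam ≤ sumSq w') (hoff : w' = 0 → β * sumSq g ≤ 2 * lam)
    (hclose : 2 * sumSq (w - w') < β * lam) :
    0 ≤ lam * (nzIndicator w - nzIndicator w') + g ⬝ᵥ (w - w') := by
  rcases eq_or_ne w' 0 with rfl | hw'
  · rcases eq_or_ne w 0 with rfl | hw
    · simp
    rw [sub_zero] at hclose ⊢
    have hprod : sumSq g * sumSq w ≤ lam ^ 2 := by
      have := mul_le_mul (hoff rfl) hclose.le (by linarith [sumSq_nonneg w]) (by positivity)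
      nlinarith [sumSq_nonneg g, sumSq_nonneg w]
    have hdot : -lam ≤ g ⬝ᵥ w :=
      (abs_le_of_sq_le_sq' ((Finset.sum_mul_sq_le_sq_mul_sq _ g w).trans hprod) hlam).1
    rw [nzIndicator_of_ne_zero hw, nzIndicator_zero]
    linarith
  · obtain ⟨rfl, hbig⟩ := hsupp hw'
    have hw : w ≠ 0 := by
      rintro rfl
      rw [zero_sub, sumSq_neg] at hclose
      nlinarith [mul_nonneg hβ.le hlam]
    rw [nzIndicator_of_ne_zero hw, nzIndicator_of_ne_zero hw', zero_dotProduct]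
    simp

lemma pStationary_first_order_growth {m n : ℕ} {β lam : ℝ} (hβ : 0 < β) (hlam : 0 ≤ lam)
    {G W W' : Matrix (Fin m) (Fin n) ℝ}
    (hP : W' ∈ ProxSet β (fun Z => lam * norm02 Z) (W' - β • G))
    (hclose : 2 * frobSq (W - W') < β * lam) :
    0 ≤ lam * (norm02 W - norm02 W') + frobInner G (W - W') := by
  rw [norm02_eq_sum_nzIndicator, norm02_eq_sum_nzIndicator, ← Finset.sum_sub_distrib,
    Finset.mul_sum, frobInner, ← Finset.sum_add_distrib]
  refine Finset.sum_nonneg fun s _ => nzIndicator_sub_add_dotProduct_nonneg hβ hlam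
    (pStationary_row_of_ne_zero hβ hlam hP) (pStationary_row_of_eq_zero hβ hlam hP) ?_
  have hrow : sumSq (W s - W' s) ≤ frobSq (W - W') := sumSq_row_le_frobSq (W - W') s
  linarith

/-- For `m = 0` the hypothesis is `x < a / 0 = 0`, which is impossible. -/
lemma two_mul_lt_of_lt_div_two_mul_sq {x a : ℝ} {m : ℕ} (hx : 0 ≤ x) (ha : 0 ≤ a)
    (h : x < a / (2 * (m : ℝ) ^ 2)) : 2 * x < a := by
  rcases Nat.eq_zero_or_pos m with rfl | hm
  · simp at h
    linarith
  have hm : (1 : ℝ) ≤ m := Nat.one_le_cast.2 hm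
  have : a / (2 * (m : ℝ) ^ 2) ≤ a / 2 :=
    div_le_div_of_nonneg_left ha two_pos (by nlinarith)
  linarith

lemma frobInner_gradPsi {p m n : ℕ} (τ γ : ℝ) (U : Matrix (Fin p) (Fin n) ℝ)
    (V : Matrix (Fin p) (Fin m) ℝ) (W D : Matrix (Fin m) (Fin n) ℝ) :
    frobInner (gradPsi τ γ U V W) D = τ * frobInner (V * W - U) (V * D) + γ * frobInner W D := by
  rw [gradPsi, frobInner_add_left, frobInner_smul_left, frobInner_smul_left,
    frobInner_transpose_mul]

lemma Psi_eq_add_frobInner_gradPsi {p m n : ℕ} (τ γ : ℝ) (U : Matrix (Fin p) (Fin n) ℝ)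
    (V : Matrix (Fin p) (Fin m) ℝ) (W' W : Matrix (Fin m) (Fin n) ℝ) :
    Psi τ γ U V W = Psi τ γ U V W' + frobInner (gradPsi τ γ U V W') (W - W')
      + τ / 2 * frobSq (V * (W - W')) + γ / 2 * frobSq (W - W') := by
  obtain ⟨D, rfl⟩ : ∃ D, W = W' + D := ⟨W - W', by abel⟩
  have hres : U - V * (W' + D) = -((V * W' - U) + V * D) := by
    rw [Matrix.mul_add]; abel
  rw [add_sub_cancel_left, frobInner_gradPsi, Psi, Psi, hres, frobSq_neg, frobSq_add, frobSq_add,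
    ← frobSq_neg (U - V * W'), neg_sub]
  ring

theorem pStationary_quadratic_growth_general
    (p m n : ℕ) (τ γ lam β : ℝ) (hτ : 0 < τ) (hlam : 0 < lam)
    (hβ : 0 < β)
    (U : Matrix (Fin p) (Fin n) ℝ) (V : Matrix (Fin p) (Fin m) ℝ)
    (Wstar : Matrix (Fin m) (Fin n) ℝ)
    (hP : Wstar ∈ ProxSet β (fun W => lam * norm02 W)
        (Wstar - β • gradPsi τ γ U V Wstar)) :
    ∀ W : Matrix (Fin m) (Fin n) ℝ,
      frobNorm (W - Wstar) < Real.sqrt (β * lam / (2 * (m : ℝ) ^ 2)) →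
        Psi τ γ U V W + lam * norm02 W - (Psi τ γ U V Wstar + lam * norm02 Wstar) ≥
          (γ / 2) * frobSq (W - Wstar) := by
  intro W hW
  have hclose : 2 * frobSq (W - Wstar) < β * lam := by
    refine two_mul_lt_of_lt_div_two_mul_sq (m := m) (frobSq_nonneg _) (by positivity) ?_
    rwa [frobNorm, Real.sqrt_lt_sqrt_iff (frobSq_nonneg _)] at hW
  have hfirst := pStationary_first_order_growth hβ hlam.le hP hclose
  have hcurv : 0 ≤ τ * frobSq (V * (W - Wstar)) := mul_nonneg hτ.le (frobSq_nonneg _)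
  rw [Psi_eq_add_frobInner_gradPsi τ γ U V Wstar W]
  linarith

/-- if `W*` is a P-stationary point of `Ψ(W) + λ‖W‖_{0,2}` for some
`β > 0`, then the quadratic growth property holds on the neighborhood
`{W : ‖W − W*‖ < √(βλ/(2m²))}`. -/
theorem pStationary_quadratic_growth
    (p m n : ℕ) (τ γ lam β : ℝ) (hτ : 0 < τ) (hγ : 0 < γ) (hlam : 0 < lam)
    (hβ : 0 < β)
    (U : Matrix (Fin p) (Fin n) ℝ) (V : Matrix (Fin p) (Fin m) ℝ)
    (Wstar : Matrix (Fin m) (Fin n) ℝ)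
    (hP : Wstar ∈ ProxSet β (fun W => lam * norm02 W)
        (Wstar - β • gradPsi τ γ U V Wstar)) :
    ∀ W : Matrix (Fin m) (Fin n) ℝ,
      frobNorm (W - Wstar) < Real.sqrt (β * lam / (2 * (m : ℝ) ^ 2)) →
        Psi τ γ U V W + lam * norm02 W - (Psi τ γ U V Wstar + lam * norm02 Wstar) ≥
          (γ / 2) * frobSq (W - Wstar) :=
  pStationary_quadratic_growth_general p m n τ γ lam β hτ hlam hβ U V Wstar hP
end
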